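/- In the two-player interconnected contest with Tullock contest success function with parameter γ = 1, let (e_1, e_2) be a profile of nonnegative effort vectors whose induced effective efforts satisfy y_1^k + y_2^k > 0 for every battlefield k. Then (e_1, e_2) is a Nash equilibrium if and only if for every player i ∈ {1,2} and every battlefield k ∈ B: v^k y_{-i}^k/(y_1^k + y_2^k)^2 + Σ_{l ≠ k} ρ_i^{k,l} v^l y_{-i}^l/(y_1^l + y_2^l)^2 ≤ c_i, with equality whenever e_i^k > 0. -/

import Mathlib

/-!
Against a fixed opponent, a player's payoff is concave in her own effort vector `x`: it is a
nonnegative combination of the concave maps `y ↦ y / (y + b)` evaluated at the effective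
efforts, which are linear in `x`, minus a linear cost. On the nonnegative orthant the KKT
conditions therefore characterise best responses. Necessity is Fermat's rule for the
one-variable function `d ↦ payoff (x + d • eₖ)`, one-sided when `xₖ = 0`; sufficiency is the
tangent-line inequality of the concave summands, summed over battlefields and regrouped by
battlefield of origin through the spillover matrix.
-/

open Finset Matrix

/-- Effective effort of a player with spillover matrix `ρ` and effort vector `e`
at battlefield `k`: `y^k = e^k + ∑_{l ≠ k} ρ^{l,k} e^l`. -/
noncomputable def effY {m : ℕ} (ρ : Matrix (Fin m) (Fin m) ℝ) (e : Fin m → ℝ)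
    (k : Fin m) : ℝ :=
  e k + ∑ l ∈ Finset.univ.erase k, ρ l k * e l

/-- Tullock contest success function with parameter `γ`.  When both effective
efforts are `0` this gives `0/0 = 0`, matching the convention. -/
noncomputable def tullock (γ y₁ y₂ : ℝ) : ℝ :=
  y₁ ^ γ / (y₁ ^ γ + y₂ ^ γ)

/-- Payoff of player `i` in the interconnected contest. -/
noncomputable def payoff {m : ℕ} (γ : ℝ) (v : Fin m → ℝ) (c : Fin 2 → ℝ)
    (ρ : Fin 2 → Matrix (Fin m) (Fin m) ℝ) (e : Fin 2 → Fin m → ℝ) (i : Fin 2) : ℝ :=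
  (∑ k, v k * tullock γ (effY (ρ i) (e i) k) (effY (ρ (1 - i)) (e (1 - i)) k))
    - c i * ∑ k, e i k

/-- Pure strategy Nash equilibrium of the interconnected contest:
nonnegative efforts, and no profitable deviation to any nonnegative effort vector. -/
def IsNashEq {m : ℕ} (γ : ℝ) (v : Fin m → ℝ) (c : Fin 2 → ℝ)
    (ρ : Fin 2 → Matrix (Fin m) (Fin m) ℝ) (e : Fin 2 → Fin m → ℝ) : Prop :=
  (∀ i k, 0 ≤ e i k) ∧
  ∀ (i : Fin 2) (e' : Fin m → ℝ), (∀ k, 0 ≤ e' k) →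
    payoff γ v c ρ (Function.update e i e') i ≤ payoff γ v c ρ e i

/-- Winning probability of player `i` at battlefield `k` under profile `e`. -/
noncomputable def eqProb {m : ℕ} (γ : ℝ) (ρ : Fin 2 → Matrix (Fin m) (Fin m) ℝ)
    (e : Fin 2 → Fin m → ℝ) (i : Fin 2) (k : Fin m) : ℝ :=
  tullock γ (effY (ρ i) (e i) k) (effY (ρ (1 - i)) (e (1 - i)) k)

lemma tullock_one (a b : ℝ) : tullock 1 a b = a / (a + b) := by
  simp [tullock]

lemma hasDerivAt_tullock_one {t b : ℝ} (h : t + b ≠ 0) :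
    HasDerivAt (fun s => tullock 1 s b) (b / (t + b) ^ 2) t := by
  simp only [tullock_one]
  exact ((hasDerivAt_id' t).fun_div ((hasDerivAt_id' t).add_const b) h).congr_deriv (by ring)

lemma tullock_one_le_tangent {t t' b : ℝ} (ht' : 0 ≤ t') (hb : 0 ≤ b) (hs : 0 < t + b) :
    tullock 1 t' b ≤ tullock 1 t b + b / (t + b) ^ 2 * (t' - t) := by
  rw [tullock_one, tullock_one]
  rcases (add_nonneg ht' hb).eq_or_lt with h | h
  · -- here the left side is the junk value `0 / 0 = 0`
    obtain ⟨rfl, rfl⟩ : t' = 0 ∧ b = 0 := ⟨by linarith, by linarith⟩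
    rw [add_zero] at hs
    simp [hs.ne']
  · have gap : t / (t + b) + b / (t + b) ^ 2 * (t' - t) - t' / (t' + b)
        = b * (t - t') ^ 2 / ((t + b) ^ 2 * (t' + b)) := by
      field_simp
      ring
    have : 0 ≤ b * (t - t') ^ 2 / ((t + b) ^ 2 * (t' + b)) := by positivity
    linarith

variable {m : ℕ}

lemma effY_nonneg {ρ : Matrix (Fin m) (Fin m) ℝ} (hρ : ∀ k l, 0 ≤ ρ k l) {e : Fin m → ℝ}
    (he : 0 ≤ e) (l : Fin m) : 0 ≤ effY ρ e l :=
  add_nonneg (he l) (sum_nonneg fun j _ => mul_nonneg (hρ j l) (he j))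

lemma effY_single (ρ : Matrix (Fin m) (Fin m) ℝ) (k l : Fin m) :
    effY ρ (Pi.single k 1) l = if l = k then 1 else ρ k l := by
  by_cases h : l = k
  · subst h
    simp [effY, Pi.single_apply]
  · simp [effY, Pi.single_apply, h, Ne.symm h]

lemma effY_eq_sum (ρ : Matrix (Fin m) (Fin m) ℝ) (e : Fin m → ℝ) (l : Fin m) :
    effY ρ e l = ∑ k, e k * effY ρ (Pi.single k 1) l := by
  rw [effY, ← add_sum_erase _ _ (mem_univ l), effY_single, if_pos rfl, mul_one]
  congr 1
  refine sum_congr rfl fun k hk => ?_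
  rw [effY_single, if_neg (ne_of_mem_erase hk).symm, mul_comm]

lemma effY_add_smul_single (ρ : Matrix (Fin m) (Fin m) ℝ) (e : Fin m → ℝ) (d : ℝ)
    (k l : Fin m) :
    effY ρ (e + d • Pi.single k 1) l = effY ρ e l + d * effY ρ (Pi.single k 1) l := by
  simp only [effY, Pi.add_apply, Pi.smul_apply, smul_eq_mul, mul_add, sum_add_distrib,
    mul_left_comm _ d, ← mul_sum]
  ring

lemma sum_mul_effY (ρ : Matrix (Fin m) (Fin m) ℝ) (w x : Fin m → ℝ) :
    ∑ l, w l * effY ρ x l = ∑ k, x k * ∑ l, effY ρ (Pi.single k 1) l * w l := by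
  simp only [effY_eq_sum ρ x, mul_sum]
  rw [sum_comm]
  exact sum_congr rfl fun k _ => sum_congr rfl fun l _ => by ring

lemma IsMaxOn.hasDerivAt_nonpos_of_Ici {φ : ℝ → ℝ} {φ' a : ℝ}
    (hmax : IsMaxOn φ (Set.Ici a) a) (hφ : HasDerivAt φ φ' a) : φ' ≤ 0 := by
  have hy : (1 : ℝ) ∈ posTangentConeAt (Set.Ici a) a :=
    mem_posTangentConeAt_of_segment_subset (by simp [Set.Icc_subset_Ici_self])
  simpa using hmax.localize.hasFDerivWithinAt_nonpos hφ.hasDerivWithinAt hy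

noncomputable def payoffAgainst (v : Fin m → ℝ) (c : ℝ) (ρ : Matrix (Fin m) (Fin m) ℝ)
    (b x : Fin m → ℝ) : ℝ :=
  (∑ l, v l * tullock 1 (effY ρ x l) (b l)) - c * ∑ l, x l

noncomputable def marginalBenefit (v b : Fin m → ℝ) (ρ : Matrix (Fin m) (Fin m) ℝ)
    (e : Fin m → ℝ) (k : Fin m) : ℝ :=
  ∑ l, effY ρ (Pi.single k 1) l * (v l * b l / (effY ρ e l + b l) ^ 2)

lemma marginalBenefit_eq (v b : Fin m → ℝ) (ρ : Matrix (Fin m) (Fin m) ℝ) (e : Fin m → ℝ)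
    (k : Fin m) :
    marginalBenefit v b ρ e k = v k * b k / (effY ρ e k + b k) ^ 2
      + ∑ l ∈ univ.erase k, ρ k l * (v l * b l / (effY ρ e l + b l) ^ 2) := by
  rw [marginalBenefit, ← add_sum_erase _ _ (mem_univ k), effY_single, if_pos rfl, one_mul]
  congr 1
  exact sum_congr rfl fun l hl => by rw [effY_single, if_neg (ne_of_mem_erase hl)]

lemma hasDerivAt_payoffAgainst_add_smul_single (v : Fin m → ℝ) {b : Fin m → ℝ} (c : ℝ)
    {ρ : Matrix (Fin m) (Fin m) ℝ} {e : Fin m → ℝ} (hs : ∀ l, effY ρ e l + b l ≠ 0)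
    (k : Fin m) :
    HasDerivAt (fun d : ℝ => payoffAgainst v c ρ b (e + d • Pi.single k 1))
      (marginalBenefit v b ρ e k - c) 0 := by
  have hline (l : Fin m) : HasDerivAt (fun d : ℝ => effY ρ (e + d • Pi.single k 1) l)
      (effY ρ (Pi.single k 1) l) 0 := by
    simp only [effY_add_smul_single]
    simpa using ((hasDerivAt_id' (0 : ℝ)).mul_const (effY ρ (Pi.single k 1) l)).const_add
      (effY ρ e l)
  have hprize (l : Fin m) : HasDerivAt
      (fun d : ℝ => v l * tullock 1 (effY ρ (e + d • Pi.single k 1) l) (b l))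
      (v l * (b l / (effY ρ e l + b l) ^ 2 * effY ρ (Pi.single k 1) l)) 0 :=
    ((hasDerivAt_tullock_one (hs l)).comp_of_eq 0 (hline l) (by simp)).const_mul (v l)
  have hcost : HasDerivAt (fun d : ℝ => c * ∑ l, (e + d • Pi.single k 1 : Fin m → ℝ) l)
      c 0 := by
    simp only [Pi.add_apply, Pi.smul_apply, smul_eq_mul, sum_add_distrib, ← mul_sum,
      sum_pi_single', mem_univ, if_true, mul_one]
    simpa using ((hasDerivAt_id' (0 : ℝ)).const_add (∑ l, e l)).const_mul c
  refine ((HasDerivAt.fun_sum fun l _ => hprize l).sub hcost).congr_deriv ?_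
  rw [marginalBenefit]
  exact congrArg (· - c) (sum_congr rfl fun l _ => by ring)

section BestResponse

variable {v b : Fin m → ℝ} {c : ℝ} {ρ : Matrix (Fin m) (Fin m) ℝ} {e : Fin m → ℝ}

lemma kkt_of_isMaxOn_payoffAgainst (he : 0 ≤ e) (hs : ∀ l, effY ρ e l + b l ≠ 0)
    (hmax : IsMaxOn (payoffAgainst v c ρ b) (Set.Ici 0) e) (k : Fin m) :
    marginalBenefit v b ρ e k ≤ c ∧ (0 < e k → marginalBenefit v b ρ e k = c) := by
  set φ := fun d : ℝ => payoffAgainst v c ρ b (e + d • Pi.single k 1)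
  have hφ : HasDerivAt φ (marginalBenefit v b ρ e k - c) 0 :=
    hasDerivAt_payoffAgainst_add_smul_single v c hs k
  have hmem {d : ℝ} (hd : -e k ≤ d) : e + d • Pi.single k 1 ∈ Set.Ici 0 := by
    intro l
    by_cases hl : l = k
    · subst hl
      simp only [Pi.zero_apply, Pi.add_apply, Pi.smul_apply, Pi.single_eq_same, smul_eq_mul,
        mul_one]
      linarith
    · simpa [hl] using he l
  have hφmax {d : ℝ} (hd : -e k ≤ d) : φ d ≤ φ 0 := by
    simpa [φ] using hmax (hmem hd)
  refine ⟨sub_nonpos.mp (IsMaxOn.hasDerivAt_nonpos_of_Ici (fun d hd => ?_) hφ), fun hek => ?_⟩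
  · exact hφmax (le_trans (by simpa using he k) hd)
  · refine sub_eq_zero.mp (IsLocalMax.hasDerivAt_eq_zero ?_ hφ)
    filter_upwards [Ioi_mem_nhds (neg_neg_iff_pos.mpr hek)] with d hd
    exact hφmax (le_of_lt hd)

lemma isMaxOn_payoffAgainst_of_kkt (hv : 0 ≤ v) (hρ : ∀ k l, 0 ≤ ρ k l) (hb : 0 ≤ b)
    (he : 0 ≤ e) (hs : ∀ l, 0 < effY ρ e l + b l)
    (hkkt : ∀ k, marginalBenefit v b ρ e k ≤ c ∧ (0 < e k → marginalBenefit v b ρ e k = c)) :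
    IsMaxOn (payoffAgainst v c ρ b) (Set.Ici 0) e := by
  intro x (hx : 0 ≤ x)
  set w : Fin m → ℝ := fun l => v l * b l / (effY ρ e l + b l) ^ 2
  have hw (y : Fin m → ℝ) : ∑ l, w l * effY ρ y l = ∑ k, y k * marginalBenefit v b ρ e k :=
    sum_mul_effY ρ w y
  have htangent (l : Fin m) : v l * tullock 1 (effY ρ x l) (b l)
      ≤ v l * tullock 1 (effY ρ e l) (b l) + w l * (effY ρ x l - effY ρ e l) := by
    have := mul_le_mul_of_nonneg_left
      (tullock_one_le_tangent (effY_nonneg hρ hx l) (hb l) (hs l)) (hv l)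
    linarith [show w l * (effY ρ x l - effY ρ e l) = v l * (b l / (effY ρ e l + b l) ^ 2 *
      (effY ρ x l - effY ρ e l)) by ring]
  have hkkt' (k : Fin m) : (x k - e k) * (marginalBenefit v b ρ e k - c) ≤ 0 := by
    rcases (show (0 : ℝ) ≤ e k from he k).eq_or_lt with hek | hek
    · rw [← hek, sub_zero]
      exact mul_nonpos_of_nonneg_of_nonpos (hx k) (sub_nonpos.mpr (hkkt k).1)
    · rw [(hkkt k).2 hek, sub_self, mul_zero]
  calc payoffAgainst v c ρ b x
      ≤ (∑ l, (v l * tullock 1 (effY ρ e l) (b l) + w l * (effY ρ x l - effY ρ e l)))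
          - c * ∑ l, x l :=
        sub_le_sub_right (sum_le_sum fun l _ => htangent l) _
    _ = payoffAgainst v c ρ b e + ∑ k, (x k - e k) * (marginalBenefit v b ρ e k - c) := by
        simp only [payoffAgainst, mul_sub, sub_mul, sum_add_distrib, sum_sub_distrib, hw,
          ← sum_mul]
        ring
    _ ≤ payoffAgainst v c ρ b e := add_le_of_nonpos_right (sum_nonpos fun k _ => hkkt' k)

lemma isMaxOn_payoffAgainst_iff (hv : 0 ≤ v) (hρ : ∀ k l, 0 ≤ ρ k l) (hb : 0 ≤ b)
    (he : 0 ≤ e) (hs : ∀ l, 0 < effY ρ e l + b l) :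
    IsMaxOn (payoffAgainst v c ρ b) (Set.Ici 0) e ↔
      ∀ k, marginalBenefit v b ρ e k ≤ c ∧ (0 < e k → marginalBenefit v b ρ e k = c) :=
  ⟨kkt_of_isMaxOn_payoffAgainst he fun l => (hs l).ne',
    isMaxOn_payoffAgainst_of_kkt hv hρ hb he hs⟩

end BestResponse

lemma payoff_update_self (v : Fin m → ℝ) (c : Fin 2 → ℝ) (ρ : Fin 2 → Matrix (Fin m) (Fin m) ℝ)
    (e : Fin 2 → Fin m → ℝ) (i : Fin 2) (x : Fin m → ℝ) :
    payoff 1 v c ρ (Function.update e i x) i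
      = payoffAgainst v (c i) (ρ i) (effY (ρ (1 - i)) (e (1 - i))) x := by
  have hi : 1 - i ≠ i := by fin_cases i <;> decide
  simp only [payoff, payoffAgainst, Function.update_self, Function.update_of_ne hi]

lemma isNashEq_one_iff {v : Fin m → ℝ} {c : Fin 2 → ℝ} {ρ : Fin 2 → Matrix (Fin m) (Fin m) ℝ}
    {e : Fin 2 → Fin m → ℝ} (he : ∀ i, 0 ≤ e i) :
    IsNashEq 1 v c ρ e ↔ ∀ i,
      IsMaxOn (payoffAgainst v (c i) (ρ i) (effY (ρ (1 - i)) (e (1 - i)))) (Set.Ici 0) (e i) := by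
  simp only [IsNashEq, isMaxOn_iff, Set.mem_Ici, ← payoff_update_self,
    Function.update_eq_self]
  exact ⟨fun h i x hx => h.2 i x hx, fun h => ⟨he, h⟩⟩

theorem nash_iff_kkt_general
    (m : ℕ)
    (v : Fin m → ℝ) (hv : ∀ k, 0 < v k)
    (c : Fin 2 → ℝ)
    (ρ : Fin 2 → Matrix (Fin m) (Fin m) ℝ)
    (hρ : ∀ i k l, 0 ≤ ρ i k l)
    (e : Fin 2 → Fin m → ℝ) (he : ∀ i k, 0 ≤ e i k)
    (hy : ∀ k, 0 < effY (ρ 0) (e 0) k + effY (ρ 1) (e 1) k) :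
    IsNashEq 1 v c ρ e ↔
      ∀ (i : Fin 2) (k : Fin m),
        (v k * effY (ρ (1 - i)) (e (1 - i)) k /
            (effY (ρ 0) (e 0) k + effY (ρ 1) (e 1) k) ^ 2
          + ∑ l ∈ Finset.univ.erase k,
              ρ i k l * (v l * effY (ρ (1 - i)) (e (1 - i)) l /
                (effY (ρ 0) (e 0) l + effY (ρ 1) (e 1) l) ^ 2) ≤ c i)
        ∧ (0 < e i k →
            v k * effY (ρ (1 - i)) (e (1 - i)) k /
                (effY (ρ 0) (e 0) k + effY (ρ 1) (e 1) k) ^ 2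
              + ∑ l ∈ Finset.univ.erase k,
                  ρ i k l * (v l * effY (ρ (1 - i)) (e (1 - i)) l /
                    (effY (ρ 0) (e 0) l + effY (ρ 1) (e 1) l) ^ 2) = c i) := by
  have htotal (i : Fin 2) (l : Fin m) : effY (ρ i) (e i) l + effY (ρ (1 - i)) (e (1 - i)) l
      = effY (ρ 0) (e 0) l + effY (ρ 1) (e 1) l := by
    fin_cases i
    · rfl
    · exact add_comm _ _
  rw [isNashEq_one_iff he]
  refine forall_congr' fun i => ?_
  rw [isMaxOn_payoffAgainst_iff (fun l => (hv l).le) (hρ i)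
    (fun l => effY_nonneg (hρ (1 - i)) (he (1 - i)) l) (he i) (fun l => htotal i l ▸ hy l)]
  simp only [marginalBenefit_eq, htotal i]

/-- first-order (KKT) characterization of Nash equilibrium for γ = 1. -/
theorem nash_iff_kkt
    (m : ℕ)
    (v : Fin m → ℝ) (hv : ∀ k, 0 < v k)
    (c : Fin 2 → ℝ) (hc : ∀ i, 0 < c i)
    (ρ : Fin 2 → Matrix (Fin m) (Fin m) ℝ)
    (hρ : ∀ i k l, 0 ≤ ρ i k l) (hρd : ∀ i k, ρ i k k = 0)
    (e : Fin 2 → Fin m → ℝ) (he : ∀ i k, 0 ≤ e i k)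
    (hy : ∀ k, 0 < effY (ρ 0) (e 0) k + effY (ρ 1) (e 1) k) :
    IsNashEq 1 v c ρ e ↔
      ∀ (i : Fin 2) (k : Fin m),
        (v k * effY (ρ (1 - i)) (e (1 - i)) k /
            (effY (ρ 0) (e 0) k + effY (ρ 1) (e 1) k) ^ 2
          + ∑ l ∈ Finset.univ.erase k,
              ρ i k l * (v l * effY (ρ (1 - i)) (e (1 - i)) l /
                (effY (ρ 0) (e 0) l + effY (ρ 1) (e 1) l) ^ 2) ≤ c i)
        ∧ (0 < e i k →
            v k * effY (ρ (1 - i)) (e (1 - i)) k /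
                (effY (ρ 0) (e 0) k + effY (ρ 1) (e 1) k) ^ 2
              + ∑ l ∈ Finset.univ.erase k,
                  ρ i k l * (v l * effY (ρ (1 - i)) (e (1 - i)) l /
                    (effY (ρ 0) (e 0) l + effY (ρ 1) (e 1) l) ^ 2) = c i) :=
  nash_iff_kkt_general m v hv c ρ hρ e he hy
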